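/- arXiv:math/0410277 — 3 statements merged into one kernel-verified Lean document; each statement's English description precedes it below -/
import Mathlib

section
/- The control system ẋ = A₁(x)u₁ + A₂(x)u₂ on S², with A₁ = M₁B₁ and A₂ = B₂, admits no locally Lipschitz stabilizing state feedback: there is no locally Lipschitz k = (k₁,k₂): S² → R² such that the closed-loop system ẋ = A₁(x)k₁(x) + A₂(x)k₂(x) is globally asymptotically stable to A = {q, −q}. -/
open Set MeasureTheory Metric Filter Manifold

noncomputable section
open scoped Classical

/-- Euclidean 3-space. -/
abbrev E3 := EuclideanSpace ℝ (Fin 3)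

/-- The unit sphere `S² ⊆ ℝ³`. -/
def S2 : Set E3 := Metric.sphere 0 1

/-- `q = (0,0,1)`. -/
def qv : E3 := EuclideanSpace.single (2 : Fin 3) (1 : ℝ)

/-- `r = (0,1,0)`. -/
def rv : E3 := EuclideanSpace.single (1 : Fin 3) (1 : ℝ)

/-- Geodesic distance on `S²`: `G(x,x') = arccos (x ⬝ x')`. -/
def geo (x y : E3) : ℝ := Real.arccos (inner ℝ x y)

/-- `V_q(x) = min {G(x,q), G(x,-q)}`, the geodesic distance to `A = {±q}`. -/
def Vq (x : E3) : ℝ := min (geo x qv) (geo x (-qv))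

/-- `V_r(x) = max {G(x,r), G(x,-r)}`. -/
def Vr (x : E3) : ℝ := max (geo x rv) (geo x (-rv))

/-- The Lyapunov function `V(x) = V_q(x)(1 + V_r(x))`. -/
def Vlyap (x : E3) : ℝ := Vq x * (1 + Vr x)

/-- Cross product on `ℝ³`. -/
def cross3 (x y : E3) : E3 :=
  (WithLp.equiv 2 (Fin 3 → ℝ)).symm
    (crossProduct ((WithLp.equiv 2 (Fin 3 → ℝ)) x) ((WithLp.equiv 2 (Fin 3 → ℝ)) y))

/-- `B₁(x) = q - (x⬝q) x`. -/
def B1 (x : E3) : E3 := qv - (inner ℝ x qv : ℝ) • x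

/-- `B₂(x) = x × q`. -/
def B2 (x : E3) : E3 := cross3 x qv

/-- `A₁ = M₁ B₁`. -/
def A1 (M₁ : E3 → ℝ) (x : E3) : E3 := M₁ x • B1 x

/-- The attractor `A = {q, -q}`. -/
def attrA : Set E3 := {qv, -qv}

/-- The standing hypotheses on the smooth cutoff `M₁ : S² → [0,1]`. -/
structure M1Hyp (M₁ : E3 → ℝ) : Prop where
  smooth : ContMDiff (𝓡 2) 𝓘(ℝ, ℝ) (⊤ : ℕ∞) (fun p : Metric.sphere (0 : E3) 1 => M₁ ↑p)
  mem_Icc : ∀ x ∈ S2, M₁ x ∈ Icc (0 : ℝ) 1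
  zero_iff : ∀ x ∈ S2,
    (M₁ x = 0 ↔ x 0 / 4 ≤ x 1 ∧ x 1 ≤ 3 * x 0 / 4 ∧ Real.pi / 4 ≤ Vq x)
  one_of : ∀ x ∈ S2,
    (7 * x 0 / 8 ≤ x 1 ∨ x 1 ≤ x 0 / 8 ∨ Vq x ≤ Real.pi / 8) → M₁ x = 1

/-- A control with values in `ℝ²`: measurable and locally essentially bounded. -/
def IsControl2 (u : ℝ → ℝ × ℝ) : Prop :=
  Measurable u ∧
  ∀ T > (0 : ℝ), ∃ C, ∀ᵐ t ∂(volume.restrict (Icc (0 : ℝ) T)), ‖u t‖ ≤ C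

/-- An (open-loop, globally defined) trajectory of `ẋ = A₁(x)u₁ + A₂(x)u₂` on `S²`. -/
def SphereTraj (M₁ : E3 → ℝ) (u : ℝ → ℝ × ℝ) (x : ℝ → E3) : Prop :=
  ContinuousOn x (Ici 0) ∧ (∀ t, 0 ≤ t → x t ∈ S2) ∧
  ∀ᵐ t ∂(volume.restrict (Ici (0 : ℝ))),
    HasDerivAt x ((u t).1 • A1 M₁ (x t) + (u t).2 • B2 (x t)) t

/-- The family of relatively open precompact subsets of `S²` containing `A`. -/
def PNS (A : Set E3) : Set (Set E3) :=
  {O | A ⊆ O ∧ O ⊆ S2 ∧ (∃ V, IsOpen V ∧ O = V ∩ S2) ∧ IsCompact (closure O)}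

/-- A (classical, forward-time) solution of the closed-loop system
`ẋ = A₁(x)k₁(x) + A₂(x)k₂(x)` on `S²`. -/
def ClosedLoopSol (M₁ : E3 → ℝ) (kfb : E3 → ℝ × ℝ) (x : ℝ → E3) : Prop :=
  (∀ t, 0 ≤ t → x t ∈ S2) ∧
  ∀ t, 0 ≤ t →
    HasDerivWithinAt x
      ((kfb (x t)).1 • A1 M₁ (x t) + (kfb (x t)).2 • B2 (x t)) (Ici 0) t

/-!
A locally Lipschitz feedback makes the closed-loop vector field Lipschitz on the compact sphere,
so closed-loop solutions depend continuously on their initial point (Grönwall). Lyapunov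
stability of `A = {q, -q}` shows that a solution which comes close enough to a pole converges to
that pole. Together, the pole a solution converges to is a locally constant function of its
initial point; it takes the value `q` at `q` and `-q` at `-q`, which is impossible on the
connected sphere.
-/

open scoped Topology ContDiff

section LocallyLipschitz

variable {α β γ : Type*} [PseudoEMetricSpace α] [PseudoEMetricSpace β] [PseudoEMetricSpace γ]
  {s : Set α}

lemma LocallyLipschitzOn.prodMk {f : α → β} {g : α → γ} (hf : LocallyLipschitzOn s f)
    (hg : LocallyLipschitzOn s g) : LocallyLipschitzOn s fun x ↦ (f x, g x) := fun x hx ↦ by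
  obtain ⟨Kf, t, ht, hKf⟩ := hf hx
  obtain ⟨Kg, u, hu, hKg⟩ := hg hx
  exact ⟨max Kf Kg, t ∩ u, inter_mem ht hu,
    (hKf.mono inter_subset_left).prodMk (hKg.mono inter_subset_right)⟩

lemma LocallyLipschitz.comp_locallyLipschitzOn {g : β → γ} {f : α → β}
    (hg : LocallyLipschitz g) (hf : LocallyLipschitzOn s f) : LocallyLipschitzOn s (g ∘ f) :=
  fun x hx ↦ by
    obtain ⟨Kg, u, hu, hKg⟩ := hg (f x)
    obtain ⟨Kf, t, ht, hKf⟩ := hf hx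
    exact ⟨Kg * Kf, t ∩ f ⁻¹' u, inter_mem ht (hf.continuousOn x hx hu),
      hKg.comp (hKf.mono inter_subset_left) fun y hy ↦ hy.2⟩

end LocallyLipschitz

lemma locallyLipschitzOn_of_forall_ball {α β : Type*} [PseudoMetricSpace α]
    [PseudoEMetricSpace β] {s : Set α} {f : α → β}
    (h : ∀ x ∈ s, ∃ ε > (0 : ℝ), ∃ K, LipschitzOnWith K f (ball x ε ∩ s)) :
    LocallyLipschitzOn s f := fun x hx ↦ by
  obtain ⟨ε, hε, K, hK⟩ := h x hx
  exact ⟨K, ball x ε ∩ s, mem_nhdsWithin_iff.2 ⟨ε, hε, subset_rfl⟩, hK⟩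

lemma Metric.infDist_pair {X : Type*} [PseudoMetricSpace X] (x a b : X) :
    infDist x {a, b} = min (dist x a) (dist x b) := by
  rw [infDist, insert_eq, infEDist_union, infEDist_singleton, infEDist_singleton,
    ENNReal.toReal_min (edist_ne_top _ _) (edist_ne_top _ _), ← dist_edist, ← dist_edist]

lemma tendsto_of_forall_infDist_pair_lt {X : Type*} [PseudoMetricSpace X] {x : ℝ → X}
    {a b p : X} (hx : ContinuousOn x (Ici 0))
    (hxab : ∀ t, 0 ≤ t → infDist (x t) {a, b} < dist a b / 2)
    (hlim : Tendsto (fun t ↦ infDist (x t) {a, b}) atTop (𝓝 0))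
    (hp : p ∈ ({a, b} : Set X)) (h0 : dist (x 0) p < dist a b / 2) :
    Tendsto x atTop (𝓝 p) := by
  wlog hpa : p = a generalizing a b
  · rw [pair_comm] at hxab hlim hp
    rw [dist_comm a b] at hxab h0
    exact this hxab hlim hp h0 (hp.resolve_right hpa)
  subst hpa
  -- The trajectory cannot jump between the disjoint balls of radius `dist p b / 2`.
  have hstay : x '' Ici 0 ⊆ ball p (dist p b / 2) := by
    refine (isPreconnected_Ici.image x hx).subset_left_of_subset_union isOpen_ball isOpen_ball
      (ball_disjoint_ball (add_halves _).le) ?_ ⟨x 0, mem_image_of_mem x (mem_Ici.2 le_rfl), h0⟩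
    rintro _ ⟨t, ht, rfl⟩
    simpa [infDist_pair, min_lt_iff] using hxab t ht
  rw [tendsto_iff_dist_tendsto_zero]
  refine hlim.congr' ?_
  filter_upwards [eventually_ge_atTop 0] with t ht
  have hxp : dist (x t) p < dist p b / 2 := hstay (mem_image_of_mem x ht)
  have := dist_triangle_left p b (x t)
  rw [infDist_pair, min_eq_left (by linarith)]

section Sphere

variable {E : Type*} [NormedAddCommGroup E] [InnerProductSpace ℝ E]

lemma exists_contDiff_retraction_sphere {p : E} (hp : p ∈ sphere (0 : E) 1) :
    ∃ ρ : E → E, ContDiff ℝ ∞ ρ ∧ (∀ x, ρ x ∈ sphere (0 : E) 1) ∧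
      ∀ᶠ x in 𝓝[sphere 0 1] p, ρ x = x := by
  have hp1 : ‖p‖ = 1 := by simpa using hp
  let θ : ContDiffBump p := ⟨1 / 4, 1 / 2, by norm_num, by norm_num⟩
  -- `χ` is the identity near `p`, constant `p` away from it, and never vanishes.
  let χ : E → E := fun x ↦ θ x • x + (1 - θ x) • p
  have hχ : ContDiff ℝ ∞ χ := (θ.contDiff.smul contDiff_id).add
    ((contDiff_const.sub θ.contDiff).smul contDiff_const)
  have hχ_ne : ∀ x, χ x ≠ 0 := by
    intro x
    by_cases hx : dist x p < 1 / 2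
    · have : ‖χ x - p‖ < ‖p‖ := by
        calc ‖χ x - p‖ = θ x * dist x p := by
              rw [show χ x - p = θ x • (x - p) by simp only [χ]; module, norm_smul,
                Real.norm_of_nonneg (θ.nonneg' x), dist_eq_norm]
          _ ≤ 1 * dist x p := by gcongr; exact θ.le_one
          _ < ‖p‖ := by rw [hp1]; linarith
      intro h; simp [h] at this
    · have : θ x = 0 := θ.zero_of_le_dist (show 1 / 2 ≤ dist x p from not_lt.1 hx)
      simp [χ, this, ← norm_ne_zero_iff, hp1]
  refine ⟨fun x ↦ ‖χ x‖⁻¹ • χ x, ?_, fun x ↦ ?_, ?_⟩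
  · exact contDiff_iff_contDiffAt.2 fun x ↦
      ((hχ.contDiffAt.norm ℝ (hχ_ne x)).inv (norm_ne_zero_iff.2 (hχ_ne x))).smul hχ.contDiffAt
  · simp [norm_smul, hχ_ne x]
  · filter_upwards [self_mem_nhdsWithin,
      nhdsWithin_le_nhds (ball_mem_nhds p (by norm_num : (0 : ℝ) < 1 / 4))] with x hx hxp
    have : θ x = 1 := θ.one_of_mem_closedBall (ball_subset_closedBall hxp)
    simp_all [χ]

lemma ContMDiff.locallyLipschitzOn_sphere {n : ℕ} [Fact (Module.finrank ℝ E = n + 1)]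
    {F : Type*} [NormedAddCommGroup F] [NormedSpace ℝ F] {f : E → F}
    (hf : ContMDiff (𝓡 n) 𝓘(ℝ, F) 1 fun p : sphere (0 : E) 1 ↦ f p) :
    LocallyLipschitzOn (sphere 0 1) f := fun p hp ↦ by
  obtain ⟨ρ, hρ, hρS, hρp⟩ := exists_contDiff_retraction_sphere hp
  have hfρ : ContDiff ℝ 1 (f ∘ ρ) := contMDiff_iff_contDiff.1 <|
    hf.comp <| (contMDiff_iff_contDiff.2 (hρ.of_le (by exact_mod_cast le_top))).codRestrict_sphere
      hρS
  obtain ⟨K, t, ht, hK⟩ := hfρ.contDiffAt.exists_lipschitzOnWith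
  refine ⟨K, t ∩ {x | ρ x = x}, inter_mem (nhdsWithin_le_nhds ht) hρp, ?_⟩
  intro x hx y hy
  have hρx : ρ x = x := hx.2
  have hρy : ρ y = y := hy.2
  simpa [hρx, hρy] using hK hx.1 hy.1

end Sphere

lemma contDiff_B1 : ContDiff ℝ ∞ B1 :=
  contDiff_const.sub ((contDiff_id.inner ℝ contDiff_const).smul contDiff_id)

lemma contDiff_B2 : ContDiff ℝ ∞ B2 := by
  refine contDiff_euclidean.2 fun i ↦ ?_
  fin_cases i <;>
  · simp only [Fin.zero_eta, Fin.mk_one, Fin.reduceFinMk, Fin.isValue, B2, cross3,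
      WithLp.equiv_apply, WithLp.equiv_symm_apply, cross_apply, Matrix.cons_val_zero,
      Matrix.cons_val_one, Matrix.cons_val]
    fun_prop

lemma M1Hyp.locallyLipschitzOn {M₁ : E3 → ℝ} (hM₁ : M1Hyp M₁) : LocallyLipschitzOn S2 M₁ :=
  have : Fact (Module.finrank ℝ E3 = 2 + 1) := ⟨finrank_euclideanSpace_fin⟩
  ContMDiff.locallyLipschitzOn_sphere (n := 2) (hM₁.smooth.of_le (by exact_mod_cast le_top))

def closedLoopField (M₁ : E3 → ℝ) (k : E3 → ℝ × ℝ) (x : E3) : E3 :=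
  (k x).1 • A1 M₁ x + (k x).2 • B2 x

lemma locallyLipschitzOn_closedLoopField {M₁ : E3 → ℝ} {k : E3 → ℝ × ℝ} {s : Set E3}
    (hM₁ : LocallyLipschitzOn s M₁) (hk : LocallyLipschitzOn s k) :
    LocallyLipschitzOn s (closedLoopField M₁ k) := by
  have hB1 : ContDiff ℝ 1 B1 := contDiff_B1.of_le (by exact_mod_cast le_top)
  have hB2 : ContDiff ℝ 1 B2 := contDiff_B2.of_le (by exact_mod_cast le_top)
  let Φ : (ℝ × ℝ) × ℝ × E3 → E3 := fun ⟨u, m, x⟩ ↦ u.1 • m • B1 x + u.2 • B2 x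
  have hΦ : ContDiff ℝ 1 Φ := by fun_prop
  have hF : closedLoopField M₁ k = Φ ∘ fun x ↦ (k x, M₁ x, x) := rfl
  rw [hF]
  exact hΦ.locallyLipschitz.comp_locallyLipschitzOn
    (hk.prodMk (hM₁.prodMk LocallyLipschitz.id.locallyLipschitzOn))

section ForwardSolution

variable {E : Type*} [NormedAddCommGroup E] [NormedSpace ℝ E]

def IsForwardSolution (F : E → E) (S : Set E) (x : ℝ → E) : Prop :=
  (∀ t, 0 ≤ t → x t ∈ S) ∧ ∀ t, 0 ≤ t → HasDerivWithinAt x (F (x t)) (Ici 0) t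

def IsLyapunovStable (F : E → E) (S A : Set E) : Prop :=
  ∀ ε > (0 : ℝ), ∃ δ > (0 : ℝ), ∀ x, IsForwardSolution F S x →
    infDist (x 0) A < δ → ∀ t, 0 ≤ t → infDist (x t) A < ε

def IsGloballyAttractive (F : E → E) (S A : Set E) : Prop :=
  ∀ x, IsForwardSolution F S x → Tendsto (fun t ↦ infDist (x t) A) atTop (𝓝 0)

namespace IsForwardSolution

variable {F : E → E} {S : Set E} {x y : ℝ → E}

lemma continuousOn (hx : IsForwardSolution F S x) : ContinuousOn x (Ici 0) :=
  fun t ht ↦ (hx.2 t ht).continuousWithinAt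

lemma comp_const_add (hx : IsForwardSolution F S x) {T : ℝ} (hT : 0 ≤ T) :
    IsForwardSolution F S fun t ↦ x (T + t) := by
  refine ⟨fun t ht ↦ hx.1 _ (by linarith), fun t ht ↦ ?_⟩
  have := (hx.2 (T + t) (by linarith)).scomp (t' := Ici 0) t
    ((hasDerivAt_id t).const_add T).hasDerivWithinAt
    fun s (hs : 0 ≤ s) ↦ show 0 ≤ T + s by linarith
  rwa [one_smul] at this

lemma dist_le_mul_exp {K : NNReal} (hF : LipschitzOnWith K F S) (hx : IsForwardSolution F S x)
    (hy : IsForwardSolution F S y) {t : ℝ} (ht : 0 ≤ t) :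
    dist (x t) (y t) ≤ dist (x 0) (y 0) * Real.exp (K * t) := by
  have := dist_le_of_trajectories_ODE_of_mem (v := fun _ ↦ F) (s := fun _ ↦ S) (fun _ _ ↦ hF)
    (hx.continuousOn.mono Icc_subset_Ici_self)
    (fun τ hτ ↦ (hx.2 τ hτ.1).mono (Ici_subset_Ici.2 hτ.1)) (fun τ hτ ↦ hx.1 τ hτ.1)
    (hy.continuousOn.mono Icc_subset_Ici_self)
    (fun τ hτ ↦ (hy.2 τ hτ.1).mono (Ici_subset_Ici.2 hτ.1)) (fun τ hτ ↦ hy.1 τ hτ.1)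
    le_rfl t ⟨ht, le_rfl⟩
  simpa using this

end IsForwardSolution

variable {F : E → E} {S : Set E} {a b : E}

lemma exists_pos_forall_tendsto_of_dist_lt (hab : a ≠ b) (hstab : IsLyapunovStable F S {a, b})
    (hattr : IsGloballyAttractive F S {a, b}) :
    ∃ δ > (0 : ℝ), ∀ x, IsForwardSolution F S x → ∀ T, 0 ≤ T → ∀ p ∈ ({a, b} : Set E),
      dist (x T) p < δ → Tendsto x atTop (𝓝 p) := by
  have hr : 0 < dist a b / 2 := half_pos (dist_pos.2 hab)
  obtain ⟨δ, hδ, hstabδ⟩ := hstab _ hr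
  refine ⟨min δ (dist a b / 2), lt_min hδ hr, fun x hx T hT p hp hxT ↦ ?_⟩
  have hy := hx.comp_const_add hT
  have hy0 : infDist (x (T + 0)) {a, b} < δ := by
    rw [add_zero]
    exact (infDist_le_dist_of_mem hp).trans_lt (hxT.trans_le (min_le_left _ _))
  have hlim := tendsto_of_forall_infDist_pair_lt hy.continuousOn (hstabδ _ hy hy0) (hattr _ hy)
    hp (by simpa using hxT.trans_le (min_le_right _ _))
  refine (hlim.comp (tendsto_atTop_add_const_right _ (-T) tendsto_id)).congr fun t ↦ ?_
  simp

lemma IsForwardSolution.exists_tendsto {x : ℝ → E} (hx : IsForwardSolution F S x) (hab : a ≠ b)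
    (hstab : IsLyapunovStable F S {a, b}) (hattr : IsGloballyAttractive F S {a, b}) :
    ∃ p ∈ ({a, b} : Set E), Tendsto x atTop (𝓝 p) := by
  obtain ⟨δ, hδ, hconv⟩ := exists_pos_forall_tendsto_of_dist_lt hab hstab hattr
  obtain ⟨T, hTδ, hT⟩ :=
    ((hattr x hx).eventually_lt_const hδ |>.and (eventually_ge_atTop 0)).exists
  obtain ⟨p, hp, hxp⟩ := (infDist_lt_iff ⟨a, mem_insert a _⟩).1 hTδ
  exact ⟨p, hp, hconv x hx T hT p hp hxp⟩

lemma IsForwardSolution.eventually_tendsto {K : NNReal} (hF : LipschitzOnWith K F S)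
    {x : ℝ → E} (hx : IsForwardSolution F S x) {p : E} (hp : p ∈ ({a, b} : Set E))
    (hxp : Tendsto x atTop (𝓝 p)) (hab : a ≠ b) (hstab : IsLyapunovStable F S {a, b})
    (hattr : IsGloballyAttractive F S {a, b}) :
    ∀ᶠ ξ in 𝓝 (x 0), ∀ y, IsForwardSolution F S y → y 0 = ξ → Tendsto y atTop (𝓝 p) := by
  obtain ⟨δ, hδ, hconv⟩ := exists_pos_forall_tendsto_of_dist_lt hab hstab hattr
  obtain ⟨T, hTδ, hT⟩ :=
    ((tendsto_iff_dist_tendsto_zero.1 hxp).eventually_lt_const (half_pos hδ) |>.and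
      (eventually_ge_atTop 0)).exists
  filter_upwards [ball_mem_nhds (x 0) (div_pos (half_pos hδ) (Real.exp_pos (K * T)))]
    with ξ hξ y hy hy0
  refine hconv y hy T hT p hp ?_
  have hyx : dist (y T) (x T) < δ / 2 := by
    calc dist (y T) (x T) ≤ dist (y 0) (x 0) * Real.exp (K * T) := hy.dist_le_mul_exp hF hx hT
      _ < δ / 2 / Real.exp (K * T) * Real.exp (K * T) := by
        gcongr
        rwa [hy0]
      _ = δ / 2 := div_mul_cancel₀ _ (Real.exp_pos _).ne'
  linarith [dist_triangle (y T) (x T) p]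

theorem IsPreconnected.eq_of_isLyapunovStable_of_isGloballyAttractive (hS : IsPreconnected S)
    {K : NNReal} (hF : LipschitzOnWith K F S) (ha : a ∈ S) (hb : b ∈ S)
    (hstab : IsLyapunovStable F S {a, b})
    (hexists : ∀ ξ ∈ S, ∃ x, IsForwardSolution F S x ∧ x 0 = ξ)
    (hattr : IsGloballyAttractive F S {a, b}) : a = b := by
  by_contra hab
  choose! sol hsol hsol0 using hexists
  have hlim : ∀ ξ ∈ S, ∃ p ∈ ({a, b} : Set E), Tendsto (sol ξ) atTop (𝓝 p) :=
    fun ξ hξ ↦ (hsol ξ hξ).exists_tendsto hab hstab hattr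
  let limit : E → E := fun ξ ↦ limUnder atTop (sol ξ)
  have hlimit : ∀ ξ p, Tendsto (sol ξ) atTop (𝓝 p) → limit ξ = p := fun _ _ h ↦ h.limUnder_eq
  have hmaps : MapsTo limit S {a, b} := fun ξ hξ ↦ by
    obtain ⟨p, hp, hξp⟩ := hlim ξ hξ
    rwa [hlimit ξ p hξp]
  have hcont : ContinuousOn limit S := fun ξ hξ ↦ by
    obtain ⟨p, hp, hξp⟩ := hlim ξ hξ
    have hev := (hsol ξ hξ).eventually_tendsto hF hp hξp hab hstab hattr
    rw [hsol0 ξ hξ] at hev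
    refine (continuousWithinAt_const (b := p)).congr_of_eventuallyEq ?_ (hlimit ξ p hξp)
    filter_upwards [nhdsWithin_le_nhds hev, self_mem_nhdsWithin] with η hη hηS
    exact hlimit η p (hη _ (hsol η hηS) (hsol0 η hηS))
  obtain ⟨δ, hδ, hconv⟩ := exists_pos_forall_tendsto_of_dist_lt hab hstab hattr
  have hfix : ∀ p ∈ ({a, b} : Set E), p ∈ S → limit p = p := fun p hp hpS ↦
    hlimit p p (hconv _ (hsol p hpS) 0 le_rfl p hp (by simpa [hsol0 p hpS] using hδ))
  apply hab
  rw [← hfix a (mem_insert a _) ha, ← hfix b (mem_insert_of_mem a rfl) hb]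
  exact hS.constant_of_mapsTo (toFinite _).isDiscrete hcont hmaps ha hb

end ForwardSolution

lemma qv_mem_S2 : qv ∈ S2 := by simp [S2, qv]

lemma qv_ne_neg_qv : qv ≠ -qv := fun h ↦ by
  have := congrArg (· 2) h
  norm_num [qv] at this

/-- **No locally Lipschitz stabilizing feedback.**  The sphere system
`ẋ = A₁(x)u₁ + A₂(x)u₂` admits no locally Lipschitz feedback
`k = (k₁,k₂) : S² → ℝ²` making the closed-loop system globally asymptotically
stable to `A = {q, -q}` (Lyapunov stability plus global attraction, with every
maximal closed-loop solution defined for all `t ≥ 0`). -/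
theorem sphere_no_lipschitz_feedback (M₁ : E3 → ℝ) (hM₁ : M1Hyp M₁) :
    ¬ ∃ kfb : E3 → ℝ × ℝ,
      -- `k` is locally Lipschitz on `S²`:
      (∀ x₀ ∈ S2, ∃ ε > (0 : ℝ), ∃ L : NNReal,
        LipschitzOnWith L kfb (ball x₀ ε ∩ S2)) ∧
      -- Lyapunov stability of `A`:
      (∀ ε > (0 : ℝ), ∃ δ > (0 : ℝ), ∀ x : ℝ → E3, ClosedLoopSol M₁ kfb x →
        infDist (x 0) attrA < δ → ∀ t, 0 ≤ t → infDist (x t) attrA < ε) ∧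
      -- global existence of closed-loop solutions:
      (∀ ξ ∈ S2, ∃ x : ℝ → E3, ClosedLoopSol M₁ kfb x ∧ x 0 = ξ) ∧
      -- global attraction to `A`:
      (∀ x : ℝ → E3, ClosedLoopSol M₁ kfb x →
        Tendsto (fun t => infDist (x t) attrA) atTop (nhds 0)) := by
  rintro ⟨k, hk, hstab, hexists, hattr⟩
  obtain ⟨K, hK⟩ := (locallyLipschitzOn_closedLoopField hM₁.locallyLipschitzOn
    (locallyLipschitzOn_of_forall_ball hk)).exists_lipschitzOnWith_of_compact
    (isCompact_sphere 0 1)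
  have hS2 : IsPreconnected S2 :=
    (isConnected_sphere (by simp [← Module.finrank_eq_rank]) 0 zero_le_one).isPreconnected
  -- `ClosedLoopSol M₁ k` unfolds to `IsForwardSolution (closedLoopField M₁ k) S2`.
  exact qv_ne_neg_qv (hS2.eq_of_isLyapunovStable_of_isGloballyAttractive hK qv_mem_S2
    (by simp [S2, qv]) hstab hexists hattr)
end
end

section
/- Along any classical closed-loop trajectory x(t) of the sphere system with feedback K (so ẋ = B₂(x) = x × q on M₁⁻¹([0,1))): at points of M₁⁻¹([0,1)) with x₃ ≠ 0, d/dt V(x(t)) = −x₁ V_q(x)/√(x₁² + x₃²) =: −μ(x), where −μ is bounded above by a negative constant on M₁⁻¹([0,1)); at points of M₁⁻¹([0,1)) with x₃ = 0, d/dt V(x(t)) = −π/2; and consequently V(x(t)) − V(x(0)) ≤ −∫₀ᵗ μ(x(s)) ds along every closed-loop trajectory remaining in M₁⁻¹([0,1)). -/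
open Set MeasureTheory Metric Filter Manifold

noncomputable section
open scoped Classical

/-- The discontinuous stabilizing feedback `K`. -/
def Kfb (M₁ : E3 → ℝ) (x : E3) : ℝ × ℝ :=
  if M₁ x = 1 then (if 0 ≤ x 2 then (1, 0) else (-1, 0)) else (0, 1)

/-- `μ(x) = x₁ V_q(x) / √(x₁² + x₃²)`. -/
def muFn (x : E3) : ℝ := x 0 * Vq x / Real.sqrt ((x 0) ^ 2 + (x 2) ^ 2)

/-!
On `M₁⁻¹([0,1))` one has `x₁, x₂ > 0`, so `V_q = arccos |x₃|` and `V_r = arccos (-x₂)`. The flow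
`ẋ = x × q = (x₂, -x₁, 0)` fixes `x₃`, hence `V_q`, and `d/dt arccos (-x₂) = -x₁ / √(1 - x₂²)`,
which gives `dV/dt = -μ`; when `x₃ = 0` this is `-π/2`. Since `√(x₁² + x₃²) ≤ 1`, `μ ≥ x₁ V_q > x₁ π/8`,
and `x₁ ≥ x₁² > sin² (π/8) / 2` because `x₂ < x₁` and `x₁² + x₂² > sin² (π/8)` (from `V_q > π/8`).
The integral inequality is then the fundamental theorem of calculus.
-/

open Real Topology

lemma inner_qv (x : E3) : inner ℝ x qv = x 2 := by
  simp [qv, EuclideanSpace.inner_single_right]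

lemma inner_rv (x : E3) : inner ℝ x rv = x 1 := by
  simp [rv, EuclideanSpace.inner_single_right]

lemma Vq_eq_arccos_abs (x : E3) : Vq x = arccos |x 2| := by
  rw [Vq, geo, geo, inner_neg_right, inner_qv, ← antitone_arccos.map_max, ← abs_eq_max_neg]

lemma Vr_eq_arccos_neg_abs (x : E3) : Vr x = arccos (-|x 1|) := by
  rw [Vr, geo, geo, inner_neg_right, inner_rv, ← antitone_arccos.map_min, abs_eq_max_neg,
    ← min_neg_neg, neg_neg, min_comm]

lemma continuous_Vq : Continuous Vq := by
  rw [funext Vq_eq_arccos_abs]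
  exact continuous_arccos.comp (PiLp.continuous_apply 2 _ 2).abs

lemma continuous_Vr : Continuous Vr := by
  rw [funext Vr_eq_arccos_neg_abs]
  exact continuous_arccos.comp (PiLp.continuous_apply 2 _ 1).abs.neg

lemma continuous_Vlyap : Continuous Vlyap :=
  continuous_Vq.mul (continuous_const.add continuous_Vr)

lemma continuousAt_muFn {y : E3} (h0 : y 0 ≠ 0) : ContinuousAt muFn y := by
  have hc : ∀ i, ContinuousAt (fun y : E3 => y i) y := fun i =>
    (PiLp.continuous_apply 2 _ i).continuousAt
  exact ((hc 0).mul continuous_Vq.continuousAt).div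
    (((hc 0).pow 2).add ((hc 2).pow 2)).sqrt (sqrt_pos.2 (by positivity)).ne'

@[simp] lemma B2_apply_zero (x : E3) : B2 x 0 = x 1 := by
  simp [B2, cross3, cross_apply, qv]

@[simp] lemma B2_apply_one (x : E3) : B2 x 1 = -x 0 := by
  simp [B2, cross3, cross_apply, qv]

@[simp] lemma B2_apply_two (x : E3) : B2 x 2 = 0 := by
  simp [B2, cross3, cross_apply, qv]

lemma sq_add_sq_add_sq_of_mem_S2 {x : E3} (hx : x ∈ S2) : x 0 ^ 2 + x 1 ^ 2 + x 2 ^ 2 = 1 := by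
  have h := EuclideanSpace.norm_sq_eq x
  rw [show ‖x‖ = 1 by simpa [S2] using hx, Fin.sum_univ_three] at h
  simpa [sq_abs] using h.symm

lemma sin_sq_lt_of_lt_Vq {y : E3} (hy : y ∈ S2) {a : ℝ} (ha : 0 ≤ a) (h : a < Vq y) :
    sin a ^ 2 < y 0 ^ 2 + y 1 ^ 2 := by
  rw [Vq_eq_arccos_abs] at h
  have hcos : |y 2| < cos a := by
    have := cos_lt_cos_of_nonneg_of_le_pi ha (arccos_le_pi _) h
    rwa [cos_arccos (by linarith [abs_nonneg (y 2)])
      ((sq_le_one_iff_abs_le_one _).1 (by nlinarith [sq_add_sq_add_sq_of_mem_S2 hy]))] at this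
  have hsq : y 2 ^ 2 < cos a ^ 2 := by
    rw [← sq_abs]; exact pow_lt_pow_left₀ hcos (abs_nonneg _) two_ne_zero
  nlinarith [sin_sq_add_cos_sq a, sq_add_sq_add_sq_of_mem_S2 hy]

lemma mul_Vq_le_muFn {y : E3} (hy : y ∈ S2) (h0 : 0 < y 0) : y 0 * Vq y ≤ muFn y := by
  refine le_div_self (mul_nonneg h0.le (by rw [Vq_eq_arccos_abs]; exact arccos_nonneg _))
    (sqrt_pos.2 (by positivity)) ?_
  rw [sqrt_le_one]
  nlinarith [sq_add_sq_add_sq_of_mem_S2 hy]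

lemma muFn_of_apply_two_eq_zero {y : E3} (h0 : 0 < y 0) (h2 : y 2 = 0) : muFn y = π / 2 := by
  rw [muFn, Vq_eq_arccos_abs, h2, abs_zero, arccos_zero, zero_pow two_ne_zero, add_zero,
    sqrt_sq h0.le]
  field_simp

lemma M1Hyp.coords_of_lt_one {M₁ : E3 → ℝ} (hM₁ : M1Hyp M₁) {y : E3} (hy : y ∈ S2)
    (h : M₁ y < 1) : 0 < y 0 ∧ 0 < y 1 ∧ y 1 < y 0 ∧ π / 8 < Vq y := by
  have hfar := mt (hM₁.one_of y hy) h.ne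
  simp only [not_or, not_le] at hfar
  obtain ⟨h78, h18, hVq⟩ := hfar
  have h0 : 0 < y 0 := by linarith
  exact ⟨h0, by linarith, by linarith, hVq⟩

lemma M1Hyp.muFn_lower_bound {M₁ : E3 → ℝ} (hM₁ : M1Hyp M₁) {y : E3} (hy : y ∈ S2)
    (h : M₁ y < 1) : π * sin (π / 8) ^ 2 / 16 ≤ muFn y := by
  obtain ⟨h0, h1, h10, hVq⟩ := hM₁.coords_of_lt_one hy h
  have hsin := sin_sq_lt_of_lt_Vq hy (by positivity) hVq
  have hy0 : sin (π / 8) ^ 2 / 2 < y 0 := by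
    nlinarith [sq_add_sq_add_sq_of_mem_S2 hy, sq_nonneg (y 2)]
  calc π * sin (π / 8) ^ 2 / 16 = sin (π / 8) ^ 2 / 2 * (π / 8) := by ring
    _ ≤ y 0 * Vq y := by gcongr
    _ ≤ muFn y := mul_Vq_le_muFn hy h0

lemma HasDerivWithinAt.apply_coord {x : ℝ → E3} {v : E3} {s : Set ℝ} {t : ℝ}
    (hx : HasDerivWithinAt x v s t) (i : Fin 3) : HasDerivWithinAt (fun τ => x τ i) (v i) s t :=
  (EuclideanSpace.proj (𝕜 := ℝ) i).hasFDerivAt.comp_hasDerivWithinAt t hx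

lemma HasDerivWithinAt.abs_of_zero {f : ℝ → ℝ} {s : Set ℝ} {t : ℝ}
    (hf : HasDerivWithinAt f 0 s t) : HasDerivWithinAt (fun τ => |f τ|) 0 s t := by
  rw [hasDerivWithinAt_iff_isLittleO] at hf ⊢
  simp only [smul_zero, sub_zero] at hf ⊢
  refine (Asymptotics.IsBigO.of_bound 1 ?_).trans_isLittleO hf
  filter_upwards with τ
  simpa using abs_abs_sub_abs_le_abs_sub (f τ) (f t)

section FlowB2

variable {x : ℝ → E3} {s : Set ℝ} {t : ℝ}

lemma hasDerivWithinAt_Vq_comp (hS : x t ∈ S2) (h0 : x t 0 ≠ 0)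
    (hx : HasDerivWithinAt x (B2 (x t)) s t) : HasDerivWithinAt (fun τ => Vq (x τ)) 0 s t := by
  have h2 : |x t 2| < 1 := by
    rw [← sq_lt_one_iff_abs_lt_one]
    nlinarith [sq_add_sq_add_sq_of_mem_S2 hS, sq_pos_of_ne_zero h0, sq_nonneg (x t 1)]
  have hx2 : HasDerivWithinAt (fun τ => x τ 2) 0 s t := by simpa using hx.apply_coord 2
  have harc := hasDerivAt_arccos (by linarith [abs_nonneg (x t 2)]) h2.ne
  simpa [Function.comp_def, ← Vq_eq_arccos_abs] using harc.comp_hasDerivWithinAt t hx2.abs_of_zero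

lemma hasDerivWithinAt_Vr_comp (hS : x t ∈ S2) (h0 : x t 0 ≠ 0) (h1 : 0 < x t 1)
    (hx : HasDerivWithinAt x (B2 (x t)) s t) :
    HasDerivWithinAt (fun τ => Vr (x τ)) (-(x t 0 / √(x t 0 ^ 2 + x t 2 ^ 2))) s t := by
  have hx1 := hx.apply_coord 1
  simp only [B2_apply_one] at hx1
  have hpos : ∀ᶠ τ in 𝓝[s] t, 0 < x τ 1 := hx1.continuousWithinAt (Ioi_mem_nhds h1)
  have hsum := sq_add_sq_add_sq_of_mem_S2 hS
  have harc := hasDerivAt_arccos (x := -x t 1)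
    (by intro h; nlinarith [sq_pos_of_ne_zero h0, sq_nonneg (x t 2)]) (by intro h; nlinarith)
  have hVr : HasDerivWithinAt (fun τ => Vr (x τ))
      (-(1 / √(1 - (-x t 1) ^ 2)) * -(-x t 0)) s t :=
    (harc.comp_hasDerivWithinAt t hx1.neg).congr_of_eventuallyEq
      (hpos.mono fun τ hτ => by simp [Vr_eq_arccos_neg_abs, abs_of_pos hτ])
      (by simp [Vr_eq_arccos_neg_abs, abs_of_pos h1])
  convert hVr using 1
  rw [show 1 - (-x t 1) ^ 2 = x t 0 ^ 2 + x t 2 ^ 2 by linarith]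
  ring

lemma hasDerivWithinAt_Vlyap_comp (hS : x t ∈ S2) (h0 : x t 0 ≠ 0) (h1 : 0 < x t 1)
    (hx : HasDerivWithinAt x (B2 (x t)) s t) :
    HasDerivWithinAt (fun τ => Vlyap (x τ)) (-muFn (x t)) s t := by
  have h := (hasDerivWithinAt_Vq_comp hS h0 hx).mul
    ((hasDerivWithinAt_Vr_comp hS h0 h1 hx).const_add 1)
  rwa [zero_mul, zero_add, mul_neg, mul_div_assoc', mul_comm (Vq _), ← muFn] at h

end FlowB2

lemma ClosedLoopSol.hasDerivWithinAt_B2 {M₁ : E3 → ℝ} {x : ℝ → E3}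
    (hx : ClosedLoopSol M₁ (Kfb M₁) x) {t : ℝ} (ht : 0 ≤ t) (h : M₁ (x t) ≠ 1) :
    HasDerivWithinAt x (B2 (x t)) (Ici 0) t := by
  simpa [Kfb, h] using hx.2 t ht

lemma ClosedLoopSol.continuousOn {M₁ : E3 → ℝ} {kfb : E3 → ℝ × ℝ} {x : ℝ → E3}
    (hx : ClosedLoopSol M₁ kfb x) : ContinuousOn x (Ici 0) :=
  fun t ht => (hx.2 t ht).continuousWithinAt

theorem intervalIntegral.integral_eq_sub_of_hasDerivWithinAt_Ici {f g : ℝ → ℝ} {a b : ℝ}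
    (hab : a ≤ b) (hf : ∀ s ∈ Icc a b, HasDerivWithinAt f (g s) (Ici a) s)
    (hg : ContinuousOn g (Icc a b)) : ∫ s in a..b, g s = f b - f a :=
  integral_eq_sub_of_hasDeriv_right_of_le hab
    (fun s hs => (hf s hs).continuousWithinAt.mono Icc_subset_Ici_self)
    (fun s hs => (hf s (Ioo_subset_Icc_self hs)).mono (Ioi_subset_Ici hs.1.le))
    (hg.intervalIntegrable_of_Icc hab)

/-- **Lyapunov decay along closed-loop trajectories in `M₁⁻¹([0,1))`.**
Along any classical closed-loop trajectory for the feedback `K` (which equals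
`(0,1)` on `M₁⁻¹([0,1))`, so there `ẋ = B₂(x) = x × q`): at points of
`M₁⁻¹([0,1))` with `x₃ ≠ 0` one has `d/dt V(x(t)) = -μ(x(t))`, where `-μ` is
bounded above by a negative constant on `M₁⁻¹([0,1))`; at points with `x₃ = 0`
one has `d/dt V(x(t)) = -π/2`; consequently
`V(x(t)) - V(x(0)) ≤ -∫₀ᵗ μ(x(s)) ds` along every closed-loop trajectory
remaining in `M₁⁻¹([0,1))`. -/
theorem lyapunov_decay_on_M1_lt_one (M₁ : E3 → ℝ) (hM₁ : M1Hyp M₁) :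
    (∃ c > (0 : ℝ), ∀ y ∈ S2, M₁ y < 1 → -muFn y ≤ -c) ∧
    ∀ x : ℝ → E3, ClosedLoopSol M₁ (Kfb M₁) x →
      (∀ t, 0 ≤ t → M₁ (x t) < 1 → x t 2 ≠ 0 →
        HasDerivWithinAt (fun s => Vlyap (x s)) (-muFn (x t)) (Ici 0) t) ∧
      (∀ t, 0 ≤ t → M₁ (x t) < 1 → x t 2 = 0 →
        HasDerivWithinAt (fun s => Vlyap (x s)) (-(Real.pi / 2)) (Ici 0) t) ∧
      ((∀ s, 0 ≤ s → M₁ (x s) < 1) →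
        ∀ t, 0 ≤ t → Vlyap (x t) - Vlyap (x 0) ≤ -∫ s in (0 : ℝ)..t, muFn (x s)) := by
  have hsin : 0 < sin (π / 8) := sin_pos_of_pos_of_lt_pi (by positivity) (by linarith [pi_pos])
  refine ⟨⟨π * sin (π / 8) ^ 2 / 16, by positivity,
    fun y hy h => neg_le_neg (hM₁.muFn_lower_bound hy h)⟩, fun x hx => ?_⟩
  have hV : ∀ t, 0 ≤ t → M₁ (x t) < 1 →
      HasDerivWithinAt (fun s => Vlyap (x s)) (-muFn (x t)) (Ici 0) t := fun t ht h => by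
    obtain ⟨h0, h1, -, -⟩ := hM₁.coords_of_lt_one (hx.1 t ht) h
    exact hasDerivWithinAt_Vlyap_comp (hx.1 t ht) h0.ne' h1 (hx.hasDerivWithinAt_B2 ht h.ne)
  refine ⟨fun t ht h _ => hV t ht h, fun t ht h h2 => ?_, fun hall t ht => ?_⟩
  · rw [← muFn_of_apply_two_eq_zero (hM₁.coords_of_lt_one (hx.1 t ht) h).1 h2]
    exact hV t ht h
  · have hμ : ContinuousOn (fun s => -muFn (x s)) (Icc 0 t) := fun s hs =>
      have h0 := (hM₁.coords_of_lt_one (hx.1 s hs.1) (hall s hs.1)).1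
      ((continuousAt_muFn h0.ne').comp_continuousWithinAt
        (hx.continuousOn.mono Icc_subset_Ici_self s hs)).neg
    rw [← intervalIntegral.integral_neg,
      intervalIntegral.integral_eq_sub_of_hasDerivWithinAt_Ici ht
        (fun s hs => hV s hs.1 (hall s hs.1)) hμ]
end
end

section
/- Let p₂, p₃, p₄ > 0, let q₀ ∈ R^k, set c = 4p₂p₃/p₄ and T₂ = max{0, (|q₀| − p₄/4)/(p₂p₃)}, and let q: [0,∞) → R^k solve q̇(t) = v(t)q(t) with q(0) = q₀, where v(t) = −c for t ∈ [0,T₂] and v(t) = 0 for t > T₂. Then t ↦ |q(t)| is non-increasing on [0,∞), |q(T₂)| ≤ p₄/4, and hence |q(t)| ≤ p₄/4 for all t ≥ T₂. Moreover, whenever |q(t)| ≥ p₄/4 and t ∈ [0,T₂], one has d|q(t)|/dt = −c|q(t)| ≤ −p₂p₃. -/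
/-!
Explicitly `‖q t‖ = exp (-(c * min t T₂)) * ‖q₀‖` for `t ≥ 0`: this is non-increasing in `t`
and has logarithmic derivative `-c` on `[0, T₂]`. With `ε = p₄ / 4`, the choice of `c` and
`T₂` makes `c * T₂ = max 0 (‖q₀‖ / ε - 1)`, and `x ≤ exp (x - 1)` turns this into
`‖q T₂‖ ≤ ε`.
-/

open Set Real

theorem intervalIntegral_eq_min_mul {v : ℝ → ℝ} {a T t : ℝ} (hT : 0 ≤ T) (ht : 0 ≤ t)
    (hv : ∀ s ∈ Icc 0 T, v s = a) (hv' : ∀ s, T < s → v s = 0) :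
    ∫ s in 0..t, v s = min t T * a := by
  rcases le_total t T with htT | hTt
  · have hconst : EqOn v (fun _ => a) (uIcc 0 t) := fun s hs => by
      rw [uIcc_of_le ht] at hs
      exact hv s ⟨hs.1, hs.2.trans htT⟩
    rw [min_eq_left htT, intervalIntegral.integral_congr hconst, intervalIntegral.integral_const,
      sub_zero, smul_eq_mul]
  · have hind : EqOn v ({x | x ≤ T}.indicator fun _ => a) (uIcc 0 t) := fun s hs => by
      rw [uIcc_of_le ht] at hs
      by_cases hsT : s ≤ T
      · rw [indicator_of_mem (s := {x | x ≤ T}) hsT, hv s ⟨hs.1, hsT⟩]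
      · rw [indicator_of_notMem (s := {x | x ≤ T}) hsT, hv' s (not_le.1 hsT)]
    rw [min_eq_right hTt, intervalIntegral.integral_congr hind,
      intervalIntegral.integral_indicator ⟨hT, hTt⟩, intervalIntegral.integral_const,
      sub_zero, smul_eq_mul]

theorem exp_neg_max_mul_le {ε : ℝ} (hε : 0 < ε) (r : ℝ) :
    exp (-max 0 (r / ε - 1)) * r ≤ ε := by
  have hratio : r / ε ≤ exp (max 0 (r / ε - 1)) :=
    calc r / ε ≤ max 0 (r / ε - 1) + 1 := by linarith [le_max_right 0 (r / ε - 1)]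
      _ ≤ exp (max 0 (r / ε - 1)) := add_one_le_exp _
  rw [exp_neg, inv_mul_le_iff₀ (exp_pos _)]
  rwa [div_le_iff₀ hε] at hratio

/-- **Key normal-component estimate.** Let `p₂ p₃ p₄ > 0`, `q₀ ∈ ℝ^k`,
`c = 4p₂p₃/p₄`, `T₂ = max {0, (|q₀| - p₄/4)/(p₂p₃)}`, and let
`q : [0,∞) → ℝ^k` be the solution of `q̇ = v q`, `q 0 = q₀`, where
`v ≡ -c` on `[0,T₂]` and `v ≡ 0` afterwards; explicitly
`q t = exp (∫₀ᵗ v) • q₀`.  Then `t ↦ |q t|` is non-increasing on `[0,∞)`,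
`|q T₂| ≤ p₄/4`, hence `|q t| ≤ p₄/4` for all `t ≥ T₂`; moreover whenever
`t ∈ [0,T₂]` and `|q t| ≥ p₄/4`, the derivative of `|q (·)|` (within `[0,T₂]`)
is `-c * |q t| ≤ -p₂ p₃`. -/
theorem normal_component_estimate {k : ℕ} (p₂ p₃ p₄ : ℝ)
    (hp₂ : 0 < p₂) (hp₃ : 0 < p₃) (hp₄ : 0 < p₄)
    (q₀ : EuclideanSpace ℝ (Fin k)) (c T₂ : ℝ)
    (hc : c = 4 * p₂ * p₃ / p₄)
    (hT₂ : T₂ = max 0 ((‖q₀‖ - p₄ / 4) / (p₂ * p₃)))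
    (v : ℝ → ℝ)
    (hv : ∀ t ∈ Icc (0 : ℝ) T₂, v t = -c) (hv' : ∀ t, T₂ < t → v t = 0)
    (q : ℝ → EuclideanSpace ℝ (Fin k))
    (hq : ∀ t, q t = Real.exp (∫ s in (0:ℝ)..t, v s) • q₀) :
    AntitoneOn (fun t => ‖q t‖) (Ici (0 : ℝ)) ∧
    ‖q T₂‖ ≤ p₄ / 4 ∧
    (∀ t, T₂ ≤ t → ‖q t‖ ≤ p₄ / 4) ∧
    (∀ t ∈ Icc (0 : ℝ) T₂, p₄ / 4 ≤ ‖q t‖ →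
      HasDerivWithinAt (fun s => ‖q s‖) (-c * ‖q t‖) (Icc (0 : ℝ) T₂) t ∧
      -c * ‖q t‖ ≤ -(p₂ * p₃)) := by
  have hc0 : 0 ≤ c := by rw [hc]; positivity
  have hT₂0 : 0 ≤ T₂ := hT₂ ▸ le_max_left _ _
  have hnorm (t : ℝ) (ht : 0 ≤ t) : ‖q t‖ = exp (-(c * min t T₂)) * ‖q₀‖ := by
    rw [hq, norm_smul, norm_of_nonneg (exp_pos _).le, intervalIntegral_eq_min_mul hT₂0 ht hv hv',
      mul_neg, mul_comm (min t T₂)]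
  have hanti : AntitoneOn (fun t => ‖q t‖) (Ici 0) := fun s hs t ht hst => by
    simp only [hnorm s hs, hnorm t ht]
    gcongr
  have hcT₂ : c * T₂ = max 0 (‖q₀‖ / (p₄ / 4) - 1) := by
    rw [hT₂, mul_max_of_nonneg _ _ hc0, mul_zero, hc]
    field_simp
  have hT₂_le : ‖q T₂‖ ≤ p₄ / 4 := by
    rw [hnorm T₂ hT₂0, min_self, hcT₂]
    exact exp_neg_max_mul_le (by positivity) _
  refine ⟨hanti, hT₂_le, fun t ht => (hanti hT₂0 (hT₂0.trans ht) ht).trans hT₂_le,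
    fun t ht hge => ⟨?_, ?_⟩⟩
  · have heq : EqOn (fun s => ‖q s‖) (fun s => exp (-(c * s)) * ‖q₀‖) (Icc 0 T₂) :=
      fun s hs => (hnorm s hs.1).trans (by rw [min_eq_left hs.2])
    have hderiv :
        HasDerivAt (fun s => exp (-(c * s)) * ‖q₀‖) (-c * (exp (-(c * t)) * ‖q₀‖)) t :=
      (((hasDerivAt_id' t).const_mul c).fun_neg.exp.mul_const ‖q₀‖).congr_deriv (by ring)
    rw [show ‖q t‖ = _ from heq ht]
    exact hderiv.hasDerivWithinAt.congr heq (heq ht)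
  · have hcε : c * (p₄ / 4) = p₂ * p₃ := by rw [hc]; field_simp
    rw [neg_mul, neg_le_neg_iff, ← hcε]
    gcongr
end
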